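/- Let T ≥ 1 and let N′, N″ be disjoint finite index sets with N := |N′| + |N″| ≥ 2. Let b ∈ ℝ^T, p_n ∈ ℝ^T for n ∈ N′ ∪ N″, d = (1/N)·(b + Σ_n p_n), and suppose hypotheses (i) and (ii) of the one-step expected descent property hold: for n ∈ N′, p_n⁺ ∈ ℝ^T with Σ_t p_n⁺(t) = Σ_t p_n(t) and ⟨d, p_n⁺ − p_n⟩ ≤ −‖p_n⁺ − p_n‖²; for n ∈ N″, (X_n)_{n∈N″} independent integrable random vectors in ℝ^T with ‖X_n‖ = ‖p_n‖ a.s., Σ_t X_n(t) = Σ_t p_n(t) a.s., and q_n = E X_n satisfying ⟨N·d, q_n − p_n⟩ ≤ −(N−1)·‖q_n − p_n‖² + ⟨p_n, q_n − p_n⟩. Let d⁺ = (1/N)·(b + Σ_{n∈N′} p_n⁺ + Σ_{n∈N″} X_n). If E[V(d⁺)] = V(d), then p_n⁺ = p_n for every n ∈ N′ and E X_n = p_n for every n ∈ N″. -/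

import Mathlib

open MeasureTheory ProbabilityTheory
open scoped RealInnerProductSpace

/-- The (time) variance of a traffic profile `d ∈ ℝ^T`. -/
noncomputable def V {T : ℕ} (d : EuclideanSpace ℝ (Fin T)) : ℝ :=
  (1 / (T : ℝ)) * ∑ t, (d t - (1 / (T : ℝ)) * ∑ s, d s) ^ 2

/-!
Write `u n = p⁺ₙ - pₙ` and `v n = E Xₙ - pₙ`. The profile sum `∑ₜ d(t)` is preserved almost
surely, so `V` changes only through `‖·‖² / T`, and `E[V(d⁺)] = V(d)` says `E‖N d⁺‖² = ‖N d‖²`.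
By independence, `E‖N d⁺‖²` is `‖E[N d⁺]‖²` plus the variances `‖pₙ‖² - ‖E Xₙ‖²` of the
norm-preserving discrete updates. Expanding around `N d` and inserting the two descent
inequalities and Cauchy–Schwarz over the `N` applications leaves
`N ∑ ‖u n‖² + (N - 1) ∑ ‖v n‖² ≤ 0`.
-/

section Normed

variable {E : Type*}

theorem norm_sum_sq_le_card_mul [SeminormedAddCommGroup E] {ι : Type*} (s : Finset ι)
    (f : ι → E) : ‖∑ i ∈ s, f i‖ ^ 2 ≤ s.card * ∑ i ∈ s, ‖f i‖ ^ 2 :=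
  (pow_le_pow_left₀ (norm_nonneg _) (norm_sum_le _ _) 2).trans (sq_sum_le_card_mul_sum_sq ..)

theorem norm_sq_sum_add_sum_le [SeminormedAddCommGroup E] {ι₁ ι₂ : Type*} [Fintype ι₁]
    [Fintype ι₂] (u : ι₁ → E) (v : ι₂ → E) :
    ‖∑ i, u i + ∑ j, v j‖ ^ 2
      ≤ (Fintype.card ι₁ + Fintype.card ι₂) * (∑ i, ‖u i‖ ^ 2 + ∑ j, ‖v j‖ ^ 2) := by
  simpa using norm_sum_sq_le_card_mul Finset.univ (Sum.elim u v)

theorem eq_zero_of_sum_norm_sq_nonpos [NormedAddCommGroup E] {ι : Type*} [Fintype ι]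
    {u : ι → E} (h : ∑ i, ‖u i‖ ^ 2 ≤ 0) (i : ι) : u i = 0 := by
  have := (Finset.sum_eq_zero_iff_of_nonneg fun i _ ↦ sq_nonneg ‖u i‖).1
    (h.antisymm (by positivity)) i (Finset.mem_univ i)
  simpa using this

end Normed

section InnerProductSpace

variable {E : Type*} [NormedAddCommGroup E] [InnerProductSpace ℝ E]

theorem eq_zero_of_descent_balance {ι₁ ι₂ : Type*} [Fintype ι₁] [Fintype ι₂] {N : ℕ}
    (hcard : Fintype.card ι₁ + Fintype.card ι₂ ≤ N) (hN : 1 < N)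
    (d : E) (u : ι₁ → E) (p v : ι₂ → E)
    (hu : ∀ i, ⟪d, u i⟫ ≤ -‖u i‖ ^ 2)
    (hv : ∀ j, ⟪(N : ℝ) • d, v j⟫ ≤ -((N : ℝ) - 1) * ‖v j‖ ^ 2 + ⟪p j, v j⟫)
    (hbal : ‖(N : ℝ) • d + (∑ i, u i + ∑ j, v j)‖ ^ 2 + ∑ j, (‖p j‖ ^ 2 - ‖p j + v j‖ ^ 2)
      = ‖(N : ℝ) • d‖ ^ 2) :
    (∀ i, u i = 0) ∧ ∀ j, v j = 0 := by
  set A := ∑ i, ‖u i‖ ^ 2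
  set B := ∑ j, ‖v j‖ ^ 2
  set P := ∑ j, ⟪p j, v j⟫
  have hN' : (1 : ℝ) < N := by exact_mod_cast hN
  have hA : ⟪(N : ℝ) • d, ∑ i, u i⟫ ≤ -N * A := by
    simp only [inner_sum, real_inner_smul_left, ← Finset.mul_sum, A, neg_mul, ← mul_neg,
      ← Finset.sum_neg_distrib]
    exact mul_le_mul_of_nonneg_left (Finset.sum_le_sum fun i _ ↦ hu i) (by positivity)
  have hB : ⟪(N : ℝ) • d, ∑ j, v j⟫ ≤ -((N : ℝ) - 1) * B + P := by
    simp only [inner_sum, B, P, Finset.mul_sum, ← Finset.sum_add_distrib]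
    exact Finset.sum_le_sum fun j _ ↦ hv j
  have hCS : ‖∑ i, u i + ∑ j, v j‖ ^ 2 ≤ N * (A + B) :=
    (norm_sq_sum_add_sum_le u v).trans
      (mul_le_mul_of_nonneg_right (by exact_mod_cast hcard) (by positivity))
  have hdefect : ∑ j, (‖p j‖ ^ 2 - ‖p j + v j‖ ^ 2) = -2 * P - B := by
    simp only [norm_add_sq_real, P, B, Finset.mul_sum, ← Finset.sum_sub_distrib]
    exact Finset.sum_congr rfl fun j _ ↦ by ring
  rw [norm_add_sq_real, inner_add_right, hdefect] at hbal
  have hA0 : 0 ≤ A := by positivity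
  have hB0 : 0 ≤ B := by positivity
  -- the `P` from the randomized descent inequality cancels against the variance defect
  have key : N * A + ((N : ℝ) - 1) * B ≤ 0 := by linarith
  exact ⟨eq_zero_of_sum_norm_sq_nonpos (by nlinarith),
    eq_zero_of_sum_norm_sq_nonpos (by nlinarith)⟩

variable [CompleteSpace E] {Ω : Type*} [MeasurableSpace Ω] {μ : Measure Ω}

theorem integral_norm_sq_const_add [IsProbabilityMeasure μ] (c : E) {Z : Ω → E}
    (hZ : MemLp Z 2 μ) :
    ∫ ω, ‖c + Z ω‖ ^ 2 ∂μ = ‖c + ∫ ω, Z ω ∂μ‖ ^ 2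
      + (∫ ω, ‖Z ω‖ ^ 2 ∂μ - ‖∫ ω, Z ω ∂μ‖ ^ 2) := by
  have hint : Integrable Z μ := hZ.integrable one_le_two
  have hsq : Integrable (fun ω ↦ ‖Z ω‖ ^ 2) μ := (memLp_two_iff_integrable_sq_norm hZ.1).1 hZ
  have hlin : Integrable (fun ω ↦ 2 * ⟪c, Z ω⟫) μ := (hint.const_inner c).const_mul 2
  have haff : Integrable (fun ω ↦ ‖c‖ ^ 2 + 2 * ⟪c, Z ω⟫) μ := (integrable_const _).add hlin
  simp_rw [norm_add_sq_real]
  rw [integral_add haff hsq, integral_add (integrable_const _) hlin,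
    integral_const, probReal_univ, one_smul, integral_const_mul, integral_inner hint]
  ring

variable [MeasurableSpace E] [BorelSpace E]

theorem ProbabilityTheory.IndepFun.integral_inner {X Y : Ω → E} (hXY : IndepFun X Y μ)
    (hX : Integrable X μ) (hY : Integrable Y μ) :
    ∫ ω, ⟪X ω, Y ω⟫ ∂μ = ⟪∫ ω, X ω ∂μ, ∫ ω, Y ω ∂μ⟫ :=
  hXY.integral_bilin hX hY (innerSL ℝ)

variable [IsProbabilityMeasure μ]

theorem integral_norm_sq_sum_of_pairwise_indepFun {ι : Type*} [Fintype ι] {X : ι → Ω → E}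
    (hX : ∀ i, MemLp (X i) 2 μ) (hindep : Pairwise fun i j ↦ IndepFun (X i) (X j) μ) :
    ∫ ω, ‖∑ i, X i ω‖ ^ 2 ∂μ = ‖∑ i, ∫ ω, X i ω ∂μ‖ ^ 2
      + ∑ i, (∫ ω, ‖X i ω‖ ^ 2 ∂μ - ‖∫ ω, X i ω ∂μ‖ ^ 2) := by
  classical
  have hint i : Integrable (X i) μ := (hX i).integrable one_le_two
  have hinner i j : Integrable (fun ω ↦ ⟪X i ω, X j ω⟫) μ := by
    obtain rfl | hij := eq_or_ne i j
    · simpa only [real_inner_self_eq_norm_sq] using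
        (memLp_two_iff_integrable_sq_norm (hX i).1).1 (hX i)
    · exact (hindep hij).integrable_bilin (hint i) (hint j) (innerSL ℝ)
  have hcross i j : ∫ ω, ⟪X i ω, X j ω⟫ ∂μ = ⟪∫ ω, X i ω ∂μ, ∫ ω, X j ω ∂μ⟫
      + if i = j then ∫ ω, ‖X i ω‖ ^ 2 ∂μ - ‖∫ ω, X i ω ∂μ‖ ^ 2 else 0 := by
    obtain rfl | hij := eq_or_ne i j
    · simp only [real_inner_self_eq_norm_sq, if_true]
      ring
    · rw [(hindep hij).integral_inner (hint i) (hint j), if_neg hij, add_zero]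
  simp_rw [← real_inner_self_eq_norm_sq, sum_inner, inner_sum]
  rw [integral_finsetSum _ fun i _ ↦ integrable_finsetSum _ fun j _ ↦ hinner i j]
  simp_rw [integral_finsetSum _ fun j _ ↦ hinner _ j, hcross, Finset.sum_add_distrib,
    Finset.sum_ite_eq, Finset.mem_univ, if_true, real_inner_self_eq_norm_sq, add_sub_cancel_left]

theorem integral_norm_sq_const_add_sum_of_pairwise_indepFun {ι : Type*} [Fintype ι] (c : E)
    {X : ι → Ω → E} (hX : ∀ i, MemLp (X i) 2 μ)
    (hindep : Pairwise fun i j ↦ IndepFun (X i) (X j) μ) :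
    ∫ ω, ‖c + ∑ i, X i ω‖ ^ 2 ∂μ = ‖c + ∑ i, ∫ ω, X i ω ∂μ‖ ^ 2
      + ∑ i, (∫ ω, ‖X i ω‖ ^ 2 ∂μ - ‖∫ ω, X i ω ∂μ‖ ^ 2) := by
  have hsum : MemLp (fun ω ↦ ∑ i, X i ω) 2 μ := memLp_finsetSum _ fun i _ ↦ hX i
  rw [integral_norm_sq_const_add c hsum, integral_norm_sq_sum_of_pairwise_indepFun hX hindep,
    integral_finsetSum _ fun i _ ↦ (hX i).integrable one_le_two]
  ring

end InnerProductSpace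

section Profile

variable {T : ℕ}

theorem V_eq_norm_sq_sub_sq (x : EuclideanSpace ℝ (Fin T)) :
    V x = (1 / (T : ℝ)) * ‖x‖ ^ 2 - ((1 / (T : ℝ)) * ∑ t, x t) ^ 2 := by
  obtain rfl | hT := eq_or_ne T 0
  · simp [V]
  rw [V, EuclideanSpace.norm_sq_eq]
  simp only [sub_sq, Finset.sum_add_distrib, Finset.sum_sub_distrib, ← Finset.sum_mul,
    ← Finset.mul_sum, Finset.sum_const, Finset.card_univ, Fintype.card_fin, nsmul_eq_mul,
    Real.norm_eq_abs, sq_abs]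
  field_simp
  ring

theorem sum_apply_finsetSum {ι : Type*} (s : Finset ι) (f : ι → EuclideanSpace ℝ (Fin T)) :
    ∑ t, (∑ n ∈ s, f n) t = ∑ n ∈ s, ∑ t, f n t := by
  simp only [WithLp.ofLp_sum, Finset.sum_apply]
  exact Finset.sum_comm

theorem integral_norm_sq_eq_of_integral_V_eq (hT : T ≠ 0) {Ω : Type*} [MeasurableSpace Ω]
    {μ : Measure Ω} [IsProbabilityMeasure μ] {D : Ω → EuclideanSpace ℝ (Fin T)}
    (d : EuclideanSpace ℝ (Fin T)) (hD : Integrable (fun ω ↦ ‖D ω‖ ^ 2) μ)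
    (hmass : ∀ᵐ ω ∂μ, ∑ t, D ω t = ∑ t, d t) (hV : ∫ ω, V (D ω) ∂μ = V d) :
    ∫ ω, ‖D ω‖ ^ 2 ∂μ = ‖d‖ ^ 2 := by
  have hVD : (fun ω ↦ V (D ω)) =ᵐ[μ]
      fun ω ↦ (1 / (T : ℝ)) * ‖D ω‖ ^ 2 - ((1 / (T : ℝ)) * ∑ t, d t) ^ 2 := by
    filter_upwards [hmass] with ω hω
    rw [V_eq_norm_sq_sub_sq, hω]
  rw [integral_congr_ae hVD, integral_sub (hD.const_mul _) (integrable_const _),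
    integral_const_mul, integral_const, probReal_univ, one_smul, V_eq_norm_sq_sub_sq] at hV
  have hT' : (1 / (T : ℝ)) ≠ 0 := by positivity
  exact mul_left_cancel₀ hT' (by linarith)

end Profile

theorem fixed_point_of_expected_descent_general (T : ℕ) (hT : 1 ≤ T)
    {ι₁ ι₂ : Type*} [Fintype ι₁] [Fintype ι₂]
    (N : ℕ) (hNdef : N = Fintype.card ι₁ + Fintype.card ι₂) (hN : 2 ≤ N)
    {Ω : Type*} [MeasurableSpace Ω] (μ : Measure Ω) [IsProbabilityMeasure μ]
    (b : EuclideanSpace ℝ (Fin T))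
    (p₁ : ι₁ → EuclideanSpace ℝ (Fin T)) (p₂ : ι₂ → EuclideanSpace ℝ (Fin T))
    (d : EuclideanSpace ℝ (Fin T))
    (hd : d = (1 / (N : ℝ)) • (b + (∑ n, p₁ n + ∑ n, p₂ n)))
    -- (i) deterministic updates of the continuous-rate applications
    (pplus : ι₁ → EuclideanSpace ℝ (Fin T))
    (hsum₁ : ∀ n, ∑ t, pplus n t = ∑ t, p₁ n t)
    (hdesc₁ : ∀ n, ⟪d, pplus n - p₁ n⟫ ≤ -‖pplus n - p₁ n‖ ^ 2)
    -- (ii) randomized updates of the discrete-rate applications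
    (X : ι₂ → Ω → EuclideanSpace ℝ (Fin T))
    (hindep : iIndepFun X μ)
    (hint : ∀ n, Integrable (X n) μ)
    (hnorm : ∀ n, ∀ᵐ ω ∂μ, ‖X n ω‖ = ‖p₂ n‖)
    (hsum₂ : ∀ n, ∀ᵐ ω ∂μ, ∑ t, X n ω t = ∑ t, p₂ n t)
    (q : ι₂ → EuclideanSpace ℝ (Fin T)) (hq : ∀ n, q n = ∫ ω, X n ω ∂μ)
    (hdesc₂ : ∀ n, ⟪(N : ℝ) • d, q n - p₂ n⟫
      ≤ -((N : ℝ) - 1) * ‖q n - p₂ n‖ ^ 2 + ⟪p₂ n, q n - p₂ n⟫)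
    -- the updated random average profile
    (dplus : Ω → EuclideanSpace ℝ (Fin T))
    (hdplus : ∀ ω, dplus ω = (1 / (N : ℝ)) • (b + (∑ n, pplus n + ∑ n, X n ω)))
    (heq : (∫ ω, V (dplus ω) ∂μ) = V d) :
    (∀ n, pplus n = p₁ n) ∧ (∀ n, q n = p₂ n) := by
  have hN0 : (N : ℝ) ≠ 0 := by positivity
  have hX2 n : MemLp (X n) 2 μ :=
    .of_bound (hint n).aestronglyMeasurable ‖p₂ n‖ ((hnorm n).mono fun ω h ↦ h.le)
  have hXsq n : ∫ ω, ‖X n ω‖ ^ 2 ∂μ = ‖p₂ n‖ ^ 2 := by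
    rw [integral_congr_ae (g := fun _ ↦ ‖p₂ n‖ ^ 2) ((hnorm n).mono fun ω h ↦ by rw [h])]
    simp
  have hNd : (N : ℝ) • d = b + (∑ n, p₁ n + ∑ n, p₂ n) := by
    rw [hd, smul_smul, mul_one_div_cancel hN0, one_smul]
  have hNdplus ω : (N : ℝ) • dplus ω = b + ∑ n, pplus n + ∑ n, X n ω := by
    rw [hdplus, smul_smul, mul_one_div_cancel hN0, one_smul, add_assoc]
  have hmass : ∀ᵐ ω ∂μ, ∑ t, dplus ω t = ∑ t, d t := by
    filter_upwards [ae_all_iff.2 hsum₂] with ω hω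
    simp only [hdplus, hd, PiLp.smul_apply, PiLp.add_apply, smul_eq_mul, ← Finset.mul_sum,
      Finset.sum_add_distrib, sum_apply_finsetSum, hsum₁, hω]
  have hdplus2 : MemLp dplus 2 μ := by
    have hconst : MemLp (fun _ : Ω ↦ b + ∑ n, pplus n) 2 μ := memLp_const _
    rw [show dplus = fun ω ↦ (1 / (N : ℝ)) • (b + ∑ n, pplus n + ∑ n, X n ω) from
      funext fun ω ↦ by rw [hdplus, add_assoc]]
    exact (hconst.add (memLp_finsetSum Finset.univ fun n _ ↦ hX2 n)).const_smul (1 / (N : ℝ))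
  have hkey := integral_norm_sq_eq_of_integral_V_eq (by omega) d
    ((memLp_two_iff_integrable_sq_norm hdplus2.1).1 hdplus2) hmass heq
  have hbal : ∫ ω, ‖(N : ℝ) • dplus ω‖ ^ 2 ∂μ = ‖(N : ℝ) • d‖ ^ 2 := by
    simp_rw [norm_smul, mul_pow]
    rw [integral_const_mul, hkey]
  simp_rw [hNdplus, integral_norm_sq_const_add_sum_of_pairwise_indepFun _ hX2
    (fun i j hij ↦ hindep.indepFun hij), hXsq, ← hq] at hbal
  have hmean : b + ∑ n, pplus n + ∑ n, q n
      = (N : ℝ) • d + (∑ n, (pplus n - p₁ n) + ∑ n, (q n - p₂ n)) := by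
    rw [hNd, Finset.sum_sub_distrib, Finset.sum_sub_distrib]
    abel
  obtain ⟨hu, hv⟩ := eq_zero_of_descent_balance hNdef.ge (by omega) d _ p₂ _ hdesc₁ hdesc₂
    (by simpa only [add_sub_cancel, ← hmean] using hbal)
  exact ⟨fun n ↦ sub_eq_zero.1 (hu n), fun n ↦ sub_eq_zero.1 (hv n)⟩

theorem fixed_point_of_expected_descent (T : ℕ) (hT : 1 ≤ T)
    {ι₁ ι₂ : Type*} [Fintype ι₁] [Fintype ι₂]
    (N : ℕ) (hNdef : N = Fintype.card ι₁ + Fintype.card ι₂) (hN : 2 ≤ N)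
    {Ω : Type*} [MeasurableSpace Ω] (μ : Measure Ω) [IsProbabilityMeasure μ]
    (b : EuclideanSpace ℝ (Fin T))
    (p₁ : ι₁ → EuclideanSpace ℝ (Fin T)) (p₂ : ι₂ → EuclideanSpace ℝ (Fin T))
    (d : EuclideanSpace ℝ (Fin T))
    (hd : d = (1 / (N : ℝ)) • (b + (∑ n, p₁ n + ∑ n, p₂ n)))
    -- (i) deterministic updates of the continuous-rate applications
    (pplus : ι₁ → EuclideanSpace ℝ (Fin T))
    (hsum₁ : ∀ n, ∑ t, pplus n t = ∑ t, p₁ n t)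
    (hdesc₁ : ∀ n, ⟪d, pplus n - p₁ n⟫ ≤ -‖pplus n - p₁ n‖ ^ 2)
    -- (ii) randomized updates of the discrete-rate applications
    (X : ι₂ → Ω → EuclideanSpace ℝ (Fin T))
    (hmeas : ∀ n, Measurable (X n))
    (hindep : iIndepFun X μ)
    (hint : ∀ n, Integrable (X n) μ)
    (hnorm : ∀ n, ∀ᵐ ω ∂μ, ‖X n ω‖ = ‖p₂ n‖)
    (hsum₂ : ∀ n, ∀ᵐ ω ∂μ, ∑ t, X n ω t = ∑ t, p₂ n t)
    (q : ι₂ → EuclideanSpace ℝ (Fin T)) (hq : ∀ n, q n = ∫ ω, X n ω ∂μ)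
    (hdesc₂ : ∀ n, ⟪(N : ℝ) • d, q n - p₂ n⟫
      ≤ -((N : ℝ) - 1) * ‖q n - p₂ n‖ ^ 2 + ⟪p₂ n, q n - p₂ n⟫)
    -- the updated random average profile
    (dplus : Ω → EuclideanSpace ℝ (Fin T))
    (hdplus : ∀ ω, dplus ω = (1 / (N : ℝ)) • (b + (∑ n, pplus n + ∑ n, X n ω)))
    (heq : (∫ ω, V (dplus ω) ∂μ) = V d) :
    (∀ n, pplus n = p₁ n) ∧ (∀ n, q n = p₂ n) :=
  fixed_point_of_expected_descent_general T hT N hNdef hN μ b p₁ p₂ d hd pplus hsum₁ hdesc₁ X hindep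
    hint hnorm hsum₂ q hq hdesc₂ dplus hdplus heq
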